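/- The group W^{B∨,RY} = t(P_{B_n}) ⋊ W_0 preserves the affine root subsystem S^{B∨,RY} = O_2 ∪ O_4 ∪ O_5 of Ram–Yip type B_n^∨, and its orbits on S^{B∨,RY} are precisely the two sets O_2 ∪ O_4 and O_5: each of these two sets is invariant under every element of W^{B∨,RY}, they are disjoint, and for any two elements a, b in the same set there exists w ∈ W^{B∨,RY} with w(a) = b. -/

import Mathlib

noncomputable section

namespace CvC

/-- Ambient space `F = ℝⁿ ⊕ ℝc`. -/
abbrev F (n : ℕ) := (Fin n → ℝ) × ℝ

/-- Bilinear form `⟨v + rc, w + sc⟩ = v ⬝ w`. -/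
def bform (n : ℕ) (x y : F n) : ℝ := ∑ i, x.1 i * y.1 i

/-- The constant function `c`. -/
def cvec (n : ℕ) : F n := (0, 1)

/-- `eps n i` is the basis vector `ε_i`, for `1 ≤ i ≤ n` (1-based; junk value `0` out of range). -/
def eps (n i : ℕ) : F n :=
  if h : 1 ≤ i ∧ i ≤ n then (Pi.single (⟨i - 1, by omega⟩ : Fin n) 1, 0) else 0

lemma bform_add_left (n : ℕ) (x y z : F n) :
    bform n (x + y) z = bform n x z + bform n y z := by
  simp [bform, add_mul, Finset.sum_add_distrib]

lemma bform_smul_left (n : ℕ) (c : ℝ) (x z : F n) :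
    bform n (c • x) z = c * bform n x z := by
  simp [bform, Finset.mul_sum, mul_assoc]

lemma bform_sub_left (n : ℕ) (x y z : F n) :
    bform n (x - y) z = bform n x z - bform n y z := by
  simp [bform, sub_mul, Finset.sum_sub_distrib]

/-- Reflection `s_f(g) = g − ⟨g, f^∨⟩ f`, `f^∨ = (2/⟨f,f⟩) f`, as a linear endomorphism. -/
def reflMap (n : ℕ) (f : F n) : Module.End ℝ (F n) where
  toFun g := g - ((2 / bform n f f) * bform n g f) • f
  map_add' x y := by
    try dsimp only
    rw [bform_add_left, mul_add, add_smul]; abel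
  map_smul' c x := by
    try dsimp only
    simp only [RingHom.id_apply]
    rw [bform_smul_left, smul_sub, smul_smul, mul_left_comm]

@[simp] lemma reflMap_apply (n : ℕ) (f g : F n) :
    reflMap n f g = g - ((2 / bform n f f) * bform n g f) • f := rfl

lemma reflMap_invol (n : ℕ) (f : F n) (hf : bform n f f ≠ 0) (g : F n) :
    reflMap n f (reflMap n f g) = g := by
  simp only [reflMap_apply]
  rw [bform_sub_left, bform_smul_left, sub_sub, ← add_smul]
  have key : (2 / bform n f f) * bform n g f +
      (2 / bform n f f) * (bform n g f - (2 / bform n f f) * bform n g f * bform n f f) = 0 := by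
    field_simp
    ring
  rw [key, zero_smul, sub_zero]

/-- Translation `t(v)(f) = f − ⟨f, v⟩c`, as a linear endomorphism. -/
def tMap (n : ℕ) (v : Fin n → ℝ) : Module.End ℝ (F n) where
  toFun g := g - bform n g (v, 0) • cvec n
  map_add' x y := by
    try dsimp only
    rw [bform_add_left, add_smul]; abel
  map_smul' c x := by
    try dsimp only
    simp only [RingHom.id_apply]
    rw [bform_smul_left, smul_sub, smul_smul]

@[simp] lemma tMap_apply (n : ℕ) (v : Fin n → ℝ) (g : F n) :
    tMap n v g = g - bform n g (v, 0) • cvec n := rfl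

lemma bform_pair_add (n : ℕ) (g : F n) (v w : Fin n → ℝ) :
    bform n g (v + w, 0) = bform n g (v, 0) + bform n g (w, 0) := by
  simp [bform, mul_add, Finset.sum_add_distrib]

lemma tMap_mul (n : ℕ) (v w : Fin n → ℝ) :
    tMap n v * tMap n w = tMap n (v + w) := by
  apply LinearMap.ext; intro g
  rw [Module.End.mul_apply]
  simp only [tMap_apply]
  rw [bform_sub_left, bform_smul_left]
  have hc : bform n (cvec n) (v, 0) = 0 := by simp [bform, cvec]
  rw [hc, mul_zero, sub_zero, bform_pair_add, add_smul]
  abel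

lemma tMap_zero (n : ℕ) : tMap n 0 = 1 := by
  apply LinearMap.ext; intro g
  rw [Module.End.one_apply, tMap_apply]
  have h0 : bform n g ((0 : Fin n → ℝ), 0) = 0 := by simp [bform]
  rw [h0, zero_smul, sub_zero]

/-- Translation `t(v)` as an invertible endomorphism. -/
def tU (n : ℕ) (v : Fin n → ℝ) : (Module.End ℝ (F n))ˣ where
  val := tMap n v
  inv := tMap n (-v)
  val_inv := by rw [tMap_mul, add_neg_cancel, tMap_zero]
  inv_val := by rw [tMap_mul, neg_add_cancel, tMap_zero]

/-- Reflection `s_f` as an invertible endomorphism (junk value `1` if `⟨f,f⟩ = 0`). -/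
def reflE (n : ℕ) (f : F n) : (Module.End ℝ (F n))ˣ :=
  if hf : bform n f f ≠ 0 then
    { val := reflMap n f
      inv := reflMap n f
      val_inv := by
        apply LinearMap.ext; intro g
        rw [Module.End.mul_apply, Module.End.one_apply]
        exact reflMap_invol n f hf g
      inv_val := by
        apply LinearMap.ext; intro g
        rw [Module.End.mul_apply, Module.End.one_apply]
        exact reflMap_invol n f hf g }
  else 1

/-- The simple affine roots `a_0, a_1, …, a_n` of type `(C_n^∨, C_n)`:
`a_0 = −2ε_1 + c`, `a_j = ε_j − ε_{j+1}` for `1 ≤ j ≤ n−1`, `a_n = 2ε_n`. -/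
def aRootF (n k : ℕ) : F n :=
  if k = 0 then (-(2:ℝ)) • eps n 1 + cvec n
  else if k = n then (2:ℝ) • eps n n
  else eps n k - eps n (k + 1)

/-- The generators `s_0, s_1, …, s_n` of the extended affine Weyl group of type
`(C_n^∨, C_n)`: `s_0 = t(ε_1) ∘ s_{2ε_1}` and `s_i = s_{a_i}` for `1 ≤ i ≤ n`. -/
def sgen (n k : ℕ) : (Module.End ℝ (F n))ˣ :=
  if k = 0 then tU n (eps n 1).1 * reflE n ((2:ℝ) • eps n 1)
  else reflE n (aRootF n k)

/-- The finite Weyl group `W_0 = ⟨s_1, …, s_n⟩` of type `C_n`. -/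
def W0grp (n : ℕ) : Subgroup (Module.End ℝ (F n))ˣ :=
  Subgroup.closure (sgen n '' Set.Icc 1 n)

/-- The extended affine Weyl group `W = ⟨s_0, s_1, …, s_n⟩` of type `(C_n^∨, C_n)`. -/
def Wgrp (n : ℕ) : Subgroup (Module.End ℝ (F n))ˣ :=
  Subgroup.closure (sgen n '' Set.Icc 0 n)

/-- Product of the generators `s_k` along a list of indices. -/
def du (n : ℕ) (l : List ℕ) : (Module.End ℝ (F n))ˣ := (l.map (sgen n)).prod

/-- The weight lattice `P_{C_n} = ℤε_1 ⊕ ⋯ ⊕ ℤε_n` (as a subset of `ℝⁿ`). -/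
def PC (n : ℕ) : Set (Fin n → ℝ) := { v | ∀ i, ∃ m : ℤ, v i = m }

/-- The weight lattice `P_{B_n} = P_{C_n} + ℤ·(1/2)(ε_1 + ⋯ + ε_n)` (as a subset of `ℝⁿ`). -/
def PB (n : ℕ) : Set (Fin n → ℝ) := { v | ∃ k : ℤ, ∀ i, ∃ m : ℤ, v i = m + (k : ℝ)/2 }

/-- `O_1 = {±ε_i + rc}`. -/
def O1 (n : ℕ) : Set (F n) :=
  { x | ∃ i, 1 ≤ i ∧ i ≤ n ∧ ∃ r : ℤ,
      x = eps n i + (r : ℝ) • cvec n ∨ x = -eps n i + (r : ℝ) • cvec n }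

/-- `O_2 = {±2ε_i + 2rc}`. -/
def O2 (n : ℕ) : Set (F n) :=
  { x | ∃ i, 1 ≤ i ∧ i ≤ n ∧ ∃ r : ℤ,
      x = (2:ℝ) • eps n i + ((2*r : ℤ) : ℝ) • cvec n ∨
      x = -((2:ℝ) • eps n i) + ((2*r : ℤ) : ℝ) • cvec n }

/-- `O_3 = {±ε_i + (r + 1/2)c}`. -/
def O3 (n : ℕ) : Set (F n) :=
  { x | ∃ i, 1 ≤ i ∧ i ≤ n ∧ ∃ r : ℤ,
      x = eps n i + ((r : ℝ) + 1/2) • cvec n ∨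
      x = -eps n i + ((r : ℝ) + 1/2) • cvec n }

/-- `O_4 = {±2ε_i + (2r+1)c}`. -/
def O4 (n : ℕ) : Set (F n) :=
  { x | ∃ i, 1 ≤ i ∧ i ≤ n ∧ ∃ r : ℤ,
      x = (2:ℝ) • eps n i + ((2*r+1 : ℤ) : ℝ) • cvec n ∨
      x = -((2:ℝ) • eps n i) + ((2*r+1 : ℤ) : ℝ) • cvec n }

/-- `O_5 = {±ε_i ± ε_j + rc, i < j}`. -/
def O5 (n : ℕ) : Set (F n) :=
  { x | ∃ i j, 1 ≤ i ∧ i < j ∧ j ≤ n ∧ ∃ r : ℤ,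
      x = eps n i + eps n j + (r : ℝ) • cvec n ∨
      x = eps n i - eps n j + (r : ℝ) • cvec n ∨
      x = -eps n i + eps n j + (r : ℝ) • cvec n ∨
      x = -eps n i - eps n j + (r : ℝ) • cvec n }

/-- The five `W`-orbits `O_1, …, O_5` of the affine root system of type `(C_n^∨, C_n)`. -/
def OO (n : ℕ) : Fin 5 → Set (F n) := ![O1 n, O2 n, O3 n, O4 n, O5 n]

/-- The affine root system `S` of type `(C_n^∨, C_n)`. -/
def Sset (n : ℕ) : Set (F n) := O1 n ∪ O2 n ∪ O3 n ∪ O4 n ∪ O5 n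

/-- The set `R̃₊ = {ε_i} ∪ {2ε_i} ∪ {ε_i ± ε_j : i < j}`. -/
def Rtplus (n : ℕ) : Set (F n) :=
  { x | (∃ i, 1 ≤ i ∧ i ≤ n ∧ (x = eps n i ∨ x = (2:ℝ) • eps n i)) ∨
        (∃ i j, 1 ≤ i ∧ i < j ∧ j ≤ n ∧ (x = eps n i + eps n j ∨ x = eps n i - eps n j)) }

/-- The set of positive affine roots `S⁺`. -/
def Splus (n : ℕ) : Set (F n) :=
  { x ∈ Sset n | 0 < x.2 } ∪ (Sset n ∩ Rtplus n)

lemma sum_single_mul (n : ℕ) (j : Fin n) (v : Fin n → ℝ) :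
    ∑ k, v k * (Pi.single j 1 : Fin n → ℝ) k = v j := by
  rw [Finset.sum_eq_single j]
  · simp
  · intro k _ hk
    simp [Pi.single_apply, hk]
  · intro h; exact absurd (Finset.mem_univ j) h

lemma bform_eps_right (n : ℕ) (x : F n) (i : ℕ) (h1 : 1 ≤ i) (h2 : i ≤ n) :
    bform n x (eps n i) = x.1 ⟨i - 1, by omega⟩ := by
  unfold bform eps
  rw [dif_pos ⟨h1, h2⟩]
  exact sum_single_mul n _ x.1

lemma bform_eps_eps (n i : ℕ) (h1 : 1 ≤ i) (h2 : i ≤ n) :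
    bform n (eps n i) (eps n i) = 1 := by
  rw [bform_eps_right n _ i h1 h2]
  unfold eps
  rw [dif_pos ⟨h1, h2⟩]
  simp

/-- `π^{C∨} = π^D`: the linear map with `ε_1 ↦ c − ε_1`, `ε_i ↦ ε_i` (`i ≥ 2`), `c ↦ c`. -/
def piCMap (n : ℕ) : Module.End ℝ (F n) where
  toFun g := g - bform n g (eps n 1) • ((2:ℝ) • eps n 1 - cvec n)
  map_add' x y := by
    try dsimp only
    rw [bform_add_left, add_smul]; abel
  map_smul' c x := by
    try dsimp only
    simp only [RingHom.id_apply]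
    rw [bform_smul_left, smul_sub c, smul_smul]

@[simp] lemma piCMap_apply (n : ℕ) (g : F n) :
    piCMap n g = g - bform n g (eps n 1) • ((2:ℝ) • eps n 1 - cvec n) := rfl

lemma piCMap_invol (n : ℕ) (g : F n) : piCMap n (piCMap n g) = g := by
  rcases Nat.eq_zero_or_pos n with h0 | hpos
  · subst h0
    have he : eps 0 1 = 0 := by simp [eps]
    simp [piCMap_apply, he, bform]
  · have hE := bform_eps_eps n 1 le_rfl hpos
    have hc : bform n (cvec n) (eps n 1) = 0 := by simp [bform, cvec]
    simp only [piCMap_apply]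
    rw [bform_sub_left, bform_smul_left, bform_sub_left, bform_smul_left, hE, hc]
    rw [sub_sub, ← add_smul]
    have key : bform n g (eps n 1) +
        (bform n g (eps n 1) - bform n g (eps n 1) * (2 * 1 - 0)) = 0 := by ring
    rw [key, zero_smul, sub_zero]

/-- `π^{C∨}` as an invertible endomorphism. -/
def piCU (n : ℕ) : (Module.End ℝ (F n))ˣ where
  val := piCMap n
  inv := piCMap n
  val_inv := by
    apply LinearMap.ext; intro g
    rw [Module.End.mul_apply, Module.End.one_apply]
    exact piCMap_invol n g
  inv_val := by
    apply LinearMap.ext; intro g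
    rw [Module.End.mul_apply, Module.End.one_apply]
    exact piCMap_invol n g

/-- `π^{B∨}`: the linear map with `ε_i ↦ (1/2)c − ε_{n−i+1}` and `c ↦ c`. -/
def piBMap (n : ℕ) : Module.End ℝ (F n) where
  toFun g := (fun i => -(g.1 (Fin.rev i)), g.2 + (1/2) * ∑ i, g.1 i)
  map_add' x y := by
    try dsimp only
    refine Prod.ext ?_ ?_
    · funext i; simp [neg_add]; ring
    · simp [Finset.sum_add_distrib]; ring
  map_smul' c x := by
    try dsimp only
    simp only [RingHom.id_apply]
    refine Prod.ext ?_ ?_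
    · funext i; simp [mul_comm]
    · simp only [Prod.smul_snd, Prod.smul_fst, Pi.smul_apply, smul_eq_mul, Finset.mul_sum,
        mul_add]
      congr 1
      exact Finset.sum_congr rfl fun i _ => by ring

@[simp] lemma piBMap_apply (n : ℕ) (g : F n) :
    piBMap n g = (fun i => -(g.1 (Fin.rev i)), g.2 + (1/2) * ∑ i, g.1 i) := rfl

lemma piBMap_invol (n : ℕ) (g : F n) : piBMap n (piBMap n g) = g := by
  simp only [piBMap_apply]
  refine Prod.ext ?_ ?_
  · funext i; simp
  · have h : ∑ i, -(g.1 (Fin.rev i)) = -∑ i, g.1 i := by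
      rw [← Finset.sum_neg_distrib]
      exact Equiv.sum_comp (Equiv.mk Fin.rev Fin.rev Fin.rev_rev Fin.rev_rev) (fun i => -(g.1 i))
    dsimp only
    rw [h]
    ring

/-- `π^{B∨}` as an invertible endomorphism. -/
def piBU (n : ℕ) : (Module.End ℝ (F n))ˣ where
  val := piBMap n
  inv := piBMap n
  val_inv := by
    apply LinearMap.ext; intro g
    rw [Module.End.mul_apply, Module.End.one_apply]
    exact piBMap_invol n g
  inv_val := by
    apply LinearMap.ext; intro g
    rw [Module.End.mul_apply, Module.End.one_apply]
    exact piBMap_invol n g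

/-- The affine root `a_0^{C∨} = −(ε_1 + ε_2) + c` of Ram–Yip type `C_n^∨`. -/
def a0C (n : ℕ) : F n := -(eps n 1 + eps n 2) + cvec n

/-- The reflection `s_0^{C∨} = s_{a_0^{C∨}}`. -/
def s0C (n : ℕ) : (Module.End ℝ (F n))ˣ := reflE n (a0C n)

/-- The extended affine Weyl group of Ram–Yip type `C_n^∨`:
`W^{C∨,RY} = ⟨s_0^{C∨}, s_1, …, s_n, π^{C∨}⟩`. -/
def WCRY (n : ℕ) : Subgroup (Module.End ℝ (F n))ˣ :=
  Subgroup.closure ({s0C n, piCU n} ∪ sgen n '' Set.Icc 1 n)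

/-- The extended affine Weyl group of Ram–Yip type `B_n^∨`:
`W^{B∨,RY} = ⟨s_0, s_1, …, s_n, π^{B∨}⟩`. -/
def WBRY (n : ℕ) : Subgroup (Module.End ℝ (F n))ˣ :=
  Subgroup.closure (insert (piBU n) (sgen n '' Set.Icc 0 n))

/-- The subgroup generated by `W_0` together with all the translations `t(μ)`, `μ ∈ P_{B_n}`. -/
def WBtrans (n : ℕ) : Subgroup (Module.End ℝ (F n))ˣ :=
  Subgroup.closure ((sgen n '' Set.Icc 1 n) ∪ (tU n '' PB n))

/-- The defining relators of the extended affine Weyl group of type `(C_n^∨, C_n)`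
on the generators `σ_0, …, σ_n`. -/
def rels (n : ℕ) : Set (FreeGroup (Fin (n + 1))) :=
  { r | (∃ i : Fin (n+1), r = FreeGroup.of i * FreeGroup.of i) ∨
        (∃ i j : Fin (n+1), ((i:ℕ) + 1 < (j:ℕ) ∨ (j:ℕ) + 1 < (i:ℕ)) ∧
          r = FreeGroup.of i * FreeGroup.of j * (FreeGroup.of i)⁻¹ * (FreeGroup.of j)⁻¹) ∨
        (∃ i j : Fin (n+1), 1 ≤ (i:ℕ) ∧ (i:ℕ) ≤ n - 2 ∧ (j:ℕ) = (i:ℕ) + 1 ∧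
          r = FreeGroup.of i * FreeGroup.of j * FreeGroup.of i *
              ((FreeGroup.of j)⁻¹ * (FreeGroup.of i)⁻¹ * (FreeGroup.of j)⁻¹)) ∨
        (∃ i j : Fin (n+1), ((i:ℕ) = 0 ∨ (i:ℕ) = n - 1) ∧ (j:ℕ) = (i:ℕ) + 1 ∧
          r = FreeGroup.of i * FreeGroup.of j * FreeGroup.of i * FreeGroup.of j *
              ((FreeGroup.of i)⁻¹ * (FreeGroup.of j)⁻¹ * (FreeGroup.of i)⁻¹ *
                (FreeGroup.of j)⁻¹)) }


-- ===================== auxiliary development =====================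

lemma bform_comm (n : ℕ) (x y : F n) : bform n x y = bform n y x := by
  simp [bform, mul_comm]

lemma eps_val (n i : ℕ) (h1 : 1 ≤ i) (h2 : i ≤ n) :
    eps n i = (Pi.single (⟨i - 1, by omega⟩ : Fin n) 1, 0) := by
  simp [eps, h1, h2]

lemma eps_fin (n : ℕ) (p : Fin n) : eps n (p.val + 1) = (Pi.single p 1, 0) := by
  rw [eps_val n (p.val+1) (by omega) (by omega)]
  have : (⟨p.val + 1 - 1, by omega⟩ : Fin n) = p := Fin.ext (by simp)
  rw [this]

lemma single_mul_sum (n : ℕ) (p : Fin n) (c : ℝ) (u : Fin n → ℝ) :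
    ∑ i, (Pi.single p c : Fin n → ℝ) i * u i = c * u p := by
  rw [Finset.sum_eq_single p]
  · simp
  · intro k _ hk; simp [Pi.single_apply, hk]
  · intro h; exact absurd (Finset.mem_univ p) h

lemma smul_single_mul_sum (n : ℕ) (p : Fin n) (c : ℝ) (u : Fin n → ℝ) :
    ∑ i, (c • (Pi.single p (1:ℝ) : Fin n → ℝ)) i * u i = c * u p := by
  have : (c • (Pi.single p (1:ℝ) : Fin n → ℝ)) = Pi.single p c := by
    funext i; simp only [Pi.smul_apply, smul_eq_mul, Pi.single_apply]; split <;> simp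
  rw [this, single_mul_sum]

/-- sign-flip of the `p`-th coordinate -/
def flip (n : ℕ) (p : Fin n) (v : Fin n → ℝ) : Fin n → ℝ :=
  fun i => if i = p then -v i else v i

lemma tU_val_apply (n : ℕ) (u : Fin n → ℝ) (g : F n) :
    (tU n u).val g = (g.1, g.2 - ∑ i, g.1 i * u i) := by
  show tMap n u g = _
  rw [tMap_apply]
  refine Prod.ext ?_ ?_
  · simp [cvec]
  · simp [cvec, bform]

lemma reflE_val (n : ℕ) (f : F n) (hf : bform n f f ≠ 0) :
    (reflE n f).val = reflMap n f := by
  rw [reflE, dif_pos hf]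

lemma reflE_inv (n : ℕ) (f : F n) : (reflE n f)⁻¹ = reflE n f := by
  apply Units.ext
  rw [reflE]
  split
  · rfl
  · rfl

lemma tU_inv (n : ℕ) (u : Fin n → ℝ) : (tU n u)⁻¹ = tU n (-u) := by
  apply Units.ext
  show (tU n u).inv = _
  show tMap n (-u) = tMap n (-u)
  rfl

lemma sgen_swap_apply (n j : ℕ) (h1 : 1 ≤ j) (h2 : j ≤ n - 1) (g : F n) :
    (sgen n j).val g =
      (g.1 ∘ Equiv.swap (⟨j - 1, by omega⟩ : Fin n) (⟨j, by omega⟩ : Fin n), g.2) := by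
  have hn : 1 ≤ n := by omega
  set a : Fin n := ⟨j - 1, by omega⟩
  set b : Fin n := ⟨j, by omega⟩
  have hab : a ≠ b := by simp [a, b, Fin.ext_iff]; omega
  have hroot : aRootF n j = (Pi.single a 1 - Pi.single b 1, 0) := by
    rw [aRootF, if_neg (by omega), if_neg (by omega),
      eps_val n j h1 (by omega), eps_val n (j+1) (by omega) (by omega)]
    have : (⟨j + 1 - 1, by omega⟩ : Fin n) = b := Fin.ext (by simp [b])
    rw [this, Prod.mk_sub_mk]
    norm_num
    rfl
  have hsgen : sgen n j = reflE n (aRootF n j) := by rw [sgen, if_neg (by omega)]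
  set f : F n := (Pi.single a 1 - Pi.single b 1, 0) with hf
  have hsum : ∀ v : Fin n → ℝ, ∑ i, v i * f.1 i = v a - v b := by
    intro v
    have : ∀ i, v i * f.1 i = v i * (Pi.single a 1 : Fin n → ℝ) i
        - v i * (Pi.single b 1 : Fin n → ℝ) i := by
      intro i; simp [f, mul_sub]
    rw [Finset.sum_congr rfl (fun i _ => this i), Finset.sum_sub_distrib,
      sum_single_mul, sum_single_mul]
  have hff : bform n f f = 2 := by
    show ∑ i, f.1 i * f.1 i = 2
    rw [hsum]
    simp [f, Pi.single_apply, hab, hab.symm]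
    norm_num
  have hgf : ∀ g : F n, bform n g f = g.1 a - g.1 b := fun g => hsum g.1
  rw [hsgen, hroot, reflE_val n f (by rw [hff]; norm_num), reflMap_apply, hff, hgf]
  refine Prod.ext ?_ ?_
  · funext i
    show g.1 i - (2 / 2 * (g.1 a - g.1 b)) * f.1 i = g.1 (Equiv.swap a b i)
    rcases eq_or_ne i a with rfl | hia
    · rw [Equiv.swap_apply_left]
      simp [f, Pi.single_apply, hab, hab.symm]
    rcases eq_or_ne i b with rfl | hib
    · rw [Equiv.swap_apply_right]
      simp [f, Pi.single_apply, hab, hab.symm]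
    · rw [Equiv.swap_apply_of_ne_of_ne hia hib]
      simp [f, Pi.single_apply, hia, hib]
  · show g.2 - (2 / 2 * (g.1 a - g.1 b)) * f.2 = g.2
    simp [f]

lemma sgen_n_apply (n : ℕ) (hn : 1 ≤ n) (g : F n) :
    (sgen n n).val g = (flip n (⟨n - 1, by omega⟩ : Fin n) g.1, g.2) := by
  set b : Fin n := ⟨n - 1, by omega⟩
  have hroot : aRootF n n = ((2:ℝ) • (Pi.single b 1 : Fin n → ℝ), 0) := by
    rw [aRootF, if_neg (by omega), if_pos rfl, eps_val n n hn le_rfl]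
    rw [Prod.smul_mk]
    norm_num
    rfl
  have hsgen : sgen n n = reflE n (aRootF n n) := by rw [sgen, if_neg (by omega)]
  set f : F n := ((2:ℝ) • (Pi.single b 1 : Fin n → ℝ), 0) with hfdef
  have hsum : ∀ v : Fin n → ℝ, ∑ i, f.1 i * v i = 2 * v b :=
    fun v => smul_single_mul_sum n b 2 v
  have hff : bform n f f = 4 := by
    show ∑ i, f.1 i * f.1 i = 4
    rw [hsum]
    simp [f]
    norm_num
  have hgf : bform n g f = 2 * g.1 b := by
    rw [bform_comm]
    exact hsum g.1
  rw [hsgen, hroot, reflE_val n f (by rw [hff]; norm_num), reflMap_apply, hff, hgf]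
  refine Prod.ext ?_ ?_
  · funext i
    show g.1 i - (2 / 4 * (2 * g.1 b)) * f.1 i = flip n b g.1 i
    rcases eq_or_ne i b with rfl | hib
    · simp [flip, f]
      ring
    · simp [flip, f, Pi.single_apply, hib]
  · show g.2 - (2 / 4 * (2 * g.1 b)) * f.2 = g.2
    simp [f]

lemma sgen_mem_WBtrans (n k : ℕ) (h1 : 1 ≤ k) (h2 : k ≤ n) : sgen n k ∈ WBtrans n :=
  Subgroup.subset_closure (Or.inl ⟨k, ⟨h1, h2⟩, rfl⟩)

lemma tU_mem_WBtrans (n : ℕ) (u : Fin n → ℝ) (hu : u ∈ PB n) : tU n u ∈ WBtrans n :=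
  Subgroup.subset_closure (Or.inr ⟨u, hu, rfl⟩)

lemma int_mem_PB (n : ℕ) (u : Fin n → ℝ) (h : ∀ i, ∃ m : ℤ, u i = m) : u ∈ PB n := by
  refine ⟨0, fun i => ?_⟩
  obtain ⟨m, hm⟩ := h i
  exact ⟨m, by rw [hm]; push_cast; ring⟩

lemma const_half_mem_PB (n : ℕ) (k : ℤ) : (fun _ => (k:ℝ)/2) ∈ PB n :=
  ⟨k, fun _ => ⟨0, by push_cast; ring⟩⟩

/-- the permutation `σ` is implemented by some element of `WBtrans n`. -/
def QP (n : ℕ) (σ : Equiv.Perm (Fin n)) : Prop :=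
  ∃ w ∈ WBtrans n, ∀ g : F n, w.val g = (g.1 ∘ σ, g.2)

lemma QP_one (n : ℕ) : QP n 1 :=
  ⟨1, one_mem _, fun g => by simp⟩

lemma QP_mul (n : ℕ) {σ τ : Equiv.Perm (Fin n)} (hσ : QP n σ) (hτ : QP n τ) :
    QP n (σ * τ) := by
  obtain ⟨w, hw, hwa⟩ := hσ
  obtain ⟨v, hv, hva⟩ := hτ
  refine ⟨v * w, mul_mem hv hw, fun g => ?_⟩
  show v.val (w.val g) = _
  rw [hwa, hva]
  rfl

lemma QP_adj (n : ℕ) (k : ℕ) (hk : k + 2 ≤ n) :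
    QP n (Equiv.swap (⟨k, by omega⟩ : Fin n) (⟨k + 1, by omega⟩ : Fin n)) := by
  refine ⟨sgen n (k+1), sgen_mem_WBtrans n (k+1) (by omega) (by omega), fun g => ?_⟩
  rw [sgen_swap_apply n (k+1) (by omega) (by omega)]
  have : (⟨k + 1 - 1, by omega⟩ : Fin n) = ⟨k, by omega⟩ := Fin.ext (by simp)
  rw [this]

lemma QP_swap_lt (n : ℕ) : ∀ d (a b : Fin n), a.val < b.val → b.val - a.val ≤ d →
    QP n (Equiv.swap a b) := by
  intro d
  induction d with
  | zero => intro a b h1 h2; omega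
  | succ d ih =>
    intro a b h1 h2
    rcases eq_or_lt_of_le (Nat.succ_le_of_lt h1) with heq | hlt
    · have hb : b = ⟨a.val + 1, by omega⟩ := Fin.ext heq.symm
      rw [hb]
      exact QP_adj n a.val (by omega)
    · set m : Fin n := ⟨b.val - 1, by omega⟩
      have ham : a.val < m.val := by simp [m]; omega
      have hmb : m.val < b.val := by simp [m]; omega
      have hab : a ≠ b := by simp [Fin.ext_iff]; omega
      have ham' : a ≠ m := by simp [Fin.ext_iff, m]; omega
      have hswap : Equiv.swap a b = Equiv.swap m b * Equiv.swap a m * Equiv.swap m b := by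
        rw [Equiv.swap_comm a b, ← Equiv.swap_mul_swap_mul_swap ham' hab]
      rw [hswap]
      have h_mb : QP n (Equiv.swap m b) := by
        have hbm : b = ⟨m.val + 1, by omega⟩ := Fin.ext (by simp [m]; omega)
        rw [hbm]
        exact QP_adj n m.val (by simp [m]; omega)
      have h_am : QP n (Equiv.swap a m) := ih a m ham (by omega)
      exact QP_mul n (QP_mul n h_mb h_am) h_mb

lemma QP_swap (n : ℕ) (a b : Fin n) : QP n (Equiv.swap a b) := by
  rcases lt_trichotomy a.val b.val with h | h | h
  · exact QP_swap_lt n (b.val - a.val) a b h le_rfl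
  · have : a = b := Fin.ext h
    rw [this, Equiv.swap_self]
    exact QP_one n
  · rw [Equiv.swap_comm]
    exact QP_swap_lt n (a.val - b.val) b a h le_rfl

lemma QP_all (n : ℕ) (σ : Equiv.Perm (Fin n)) : QP n σ := by
  refine Equiv.Perm.swap_induction_on σ (QP_one n) ?_
  intro f x y hxy hf
  exact QP_mul n (QP_swap n x y) hf

/-- sign flips are implemented in `WBtrans n`. -/
lemma flip_mem (n : ℕ) (hn : 1 ≤ n) (p : Fin n) :
    ∃ w ∈ WBtrans n, ∀ g : F n, w.val g = (flip n p g.1, g.2) := by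
  set b : Fin n := ⟨n - 1, by omega⟩
  set σ := Equiv.swap p b with hσ
  obtain ⟨u, hu, hua⟩ := QP_swap n p b
  refine ⟨u * sgen n n * u, mul_mem (mul_mem hu (sgen_mem_WBtrans n n hn le_rfl)) hu,
    fun g => ?_⟩
  show u.val ((sgen n n).val (u.val g)) = _
  rw [hua, sgen_n_apply n hn, hua]
  refine Prod.ext ?_ rfl
  funext i
  show flip n b (g.1 ∘ Equiv.swap p b) (Equiv.swap p b i) = flip n p g.1 i
  simp only [flip, Function.comp_apply, Equiv.swap_apply_self]
  by_cases hip : i = p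
  · rw [hip, if_pos (Equiv.swap_apply_left p b), if_pos rfl]
  · rw [if_neg ?_, if_neg hip]
    intro hcon
    apply hip
    have := congrArg (Equiv.swap p b) hcon
    rwa [Equiv.swap_apply_self, Equiv.swap_apply_right] at this

lemma form_single (n : ℕ) (p : Fin n) (e t : ℝ) :
    e • eps n (p.val+1) + t • cvec n = ((e • (Pi.single p 1 : Fin n → ℝ), t) : F n) := by
  rw [eps_fin]
  refine Prod.ext ?_ ?_ <;> simp [cvec]

lemma form_pair (n : ℕ) (p q : Fin n) (e f t : ℝ) :
    e • eps n (p.val+1) + f • eps n (q.val+1) + t • cvec n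
      = ((e • (Pi.single p 1 : Fin n → ℝ) + f • (Pi.single q 1 : Fin n → ℝ), t) : F n) := by
  rw [eps_fin, eps_fin]
  refine Prod.ext ?_ ?_ <;> simp [cvec]

lemma form_single' (n i : ℕ) (h1 : 1 ≤ i) (h2 : i ≤ n) (e t : ℝ) :
    e • eps n i + t • cvec n
      = ((e • (Pi.single (⟨i - 1, by omega⟩ : Fin n) 1 : Fin n → ℝ), t) : F n) := by
  rw [eps_val n i h1 h2]
  refine Prod.ext ?_ ?_ <;> simp [cvec]

lemma form_pair' (n i j : ℕ) (h1 : 1 ≤ i) (h2 : i ≤ n) (h3 : 1 ≤ j) (h4 : j ≤ n) (e f t : ℝ) :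
    e • eps n i + f • eps n j + t • cvec n
      = ((e • (Pi.single (⟨i - 1, by omega⟩ : Fin n) 1 : Fin n → ℝ)
          + f • (Pi.single (⟨j - 1, by omega⟩ : Fin n) 1 : Fin n → ℝ), t) : F n) := by
  rw [eps_val n i h1 h2, eps_val n j h3 h4]
  refine Prod.ext ?_ ?_ <;> simp [cvec]

def isO24 (n : ℕ) (x : F n) : Prop :=
  ∃ (p : Fin n) (e : ℝ) (m : ℤ), (e = 2 ∨ e = -2) ∧
    x = (e • (Pi.single p 1 : Fin n → ℝ), (m:ℝ))

def isO5 (n : ℕ) (x : F n) : Prop :=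
  ∃ (p q : Fin n) (e f : ℝ) (r : ℤ), p ≠ q ∧ (e = 1 ∨ e = -1) ∧ (f = 1 ∨ f = -1) ∧
    x = (e • (Pi.single p 1 : Fin n → ℝ) + f • (Pi.single q 1 : Fin n → ℝ), (r:ℝ))

lemma mem_O24_iff (n : ℕ) (x : F n) : x ∈ O2 n ∪ O4 n ↔ isO24 n x := by
  constructor
  · rintro (⟨i, h1, h2, r, hx | hx⟩ | ⟨i, h1, h2, r, hx | hx⟩)
    · refine ⟨⟨i-1, by omega⟩, 2, 2*r, Or.inl rfl, ?_⟩
      rw [hx]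
      exact form_single' n i h1 h2 2 _
    · refine ⟨⟨i-1, by omega⟩, -2, 2*r, Or.inr rfl, ?_⟩
      rw [hx]
      have := form_single' n i h1 h2 (-2) (((2*r:ℤ)):ℝ)
      rwa [neg_smul] at this
    · refine ⟨⟨i-1, by omega⟩, 2, 2*r+1, Or.inl rfl, ?_⟩
      rw [hx]
      exact form_single' n i h1 h2 2 _
    · refine ⟨⟨i-1, by omega⟩, -2, 2*r+1, Or.inr rfl, ?_⟩
      rw [hx]
      have := form_single' n i h1 h2 (-2) (((2*r+1:ℤ)):ℝ)
      rwa [neg_smul] at this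
  · rintro ⟨p, e, m, he, rfl⟩
    rcases Int.even_or_odd m with ⟨r, hr⟩ | ⟨r, hr⟩
    · left
      refine ⟨p.val+1, by omega, by omega, r, ?_⟩
      have hm : (m:ℝ) = ((2*r : ℤ) : ℝ) := by rw [hr]; try (push_cast; ring)
      rcases he with rfl | rfl
      · left; rw [form_single, hm]
      · right; rw [← neg_smul, form_single, hm]
    · right
      refine ⟨p.val+1, by omega, by omega, r, ?_⟩
      have hm : (m:ℝ) = ((2*r+1 : ℤ) : ℝ) := by rw [hr]; try (push_cast; ring)
      rcases he with rfl | rfl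
      · left; rw [form_single, hm]
      · right; rw [← neg_smul, form_single, hm]

lemma O5_of (n : ℕ) (p q : Fin n) (hpq : p.val < q.val) (e f : ℝ)
    (he : e = 1 ∨ e = -1) (hf : f = 1 ∨ f = -1) (r : ℤ) :
    ((e • (Pi.single p 1 : Fin n → ℝ) + f • (Pi.single q 1 : Fin n → ℝ), (r:ℝ)) : F n)
      ∈ O5 n := by
  refine ⟨p.val+1, q.val+1, by omega, by omega, by omega, r, ?_⟩
  rcases he with rfl | rfl <;> rcases hf with rfl | rfl
  · left; rw [← form_pair n p q 1 1]; simp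
  · right; left; rw [← form_pair n p q 1 (-1)]; simp [sub_eq_add_neg]
  · right; right; left; rw [← form_pair n p q (-1) 1]; simp
  · right; right; right; rw [← form_pair n p q (-1) (-1)]; simp [sub_eq_add_neg]

lemma mem_O5_iff (n : ℕ) (x : F n) : x ∈ O5 n ↔ isO5 n x := by
  constructor
  · rintro ⟨i, j, h1, hij, h2, r, hx | hx | hx | hx⟩
    · refine ⟨⟨i-1, by omega⟩, ⟨j-1, by omega⟩, 1, 1, r,
        by simp [Fin.ext_iff]; omega, Or.inl rfl, Or.inl rfl, ?_⟩
      rw [hx]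
      have := form_pair' n i j h1 (by omega) (by omega) h2 1 1 ((r:ℤ):ℝ)
      rwa [one_smul, one_smul] at this
    · refine ⟨⟨i-1, by omega⟩, ⟨j-1, by omega⟩, 1, -1, r,
        by simp [Fin.ext_iff]; omega, Or.inl rfl, Or.inr rfl, ?_⟩
      rw [hx]
      have := form_pair' n i j h1 (by omega) (by omega) h2 1 (-1) ((r:ℤ):ℝ)
      rwa [one_smul, neg_one_smul, ← sub_eq_add_neg] at this
    · refine ⟨⟨i-1, by omega⟩, ⟨j-1, by omega⟩, -1, 1, r,
        by simp [Fin.ext_iff]; omega, Or.inr rfl, Or.inl rfl, ?_⟩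
      rw [hx]
      have := form_pair' n i j h1 (by omega) (by omega) h2 (-1) 1 ((r:ℤ):ℝ)
      rwa [one_smul, neg_one_smul] at this
    · refine ⟨⟨i-1, by omega⟩, ⟨j-1, by omega⟩, -1, -1, r,
        by simp [Fin.ext_iff]; omega, Or.inr rfl, Or.inr rfl, ?_⟩
      rw [hx]
      have := form_pair' n i j h1 (by omega) (by omega) h2 (-1) (-1) ((r:ℤ):ℝ)
      rwa [neg_one_smul, neg_one_smul, ← sub_eq_add_neg] at this
  · rintro ⟨p, q, e, f, r, hpq, he, hf, rfl⟩
    rcases lt_or_gt_of_ne (fun h => hpq (Fin.ext h) : p.val ≠ q.val) with h | h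
    · exact O5_of n p q h e f he hf r
    · rw [add_comm (e • (Pi.single p 1 : Fin n → ℝ))]
      exact O5_of n q p h f e hf he r

lemma single_comp_perm (n : ℕ) (σ : Equiv.Perm (Fin n)) (p : Fin n) (c : ℝ) :
    (Pi.single p c : Fin n → ℝ) ∘ σ = Pi.single (σ⁻¹ p) c := by
  funext i
  simp only [Function.comp_apply, Pi.single_apply, Equiv.Perm.inv_def]
  by_cases h : i = σ.symm p
  · rw [if_pos (by rw [h]; exact σ.apply_symm_apply p), if_pos h]
  · rw [if_neg (fun hc => h (by rw [← hc, Equiv.symm_apply_apply])), if_neg h]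

lemma mul_single_sum (n : ℕ) (p : Fin n) (c : ℝ) (v : Fin n → ℝ) :
    ∑ i, v i * (Pi.single p c : Fin n → ℝ) i = v p * c := by
  rw [Finset.sum_eq_single p]
  · simp
  · intro k _ hk; simp [Pi.single_apply, hk]
  · intro h; exact absurd (Finset.mem_univ p) h

lemma isO24_perm (n : ℕ) (σ : Equiv.Perm (Fin n)) (x : F n) (hx : isO24 n x) :
    isO24 n (x.1 ∘ σ, x.2) := by
  obtain ⟨p, e, m, he, rfl⟩ := hx
  refine ⟨σ⁻¹ p, e, m, he, ?_⟩
  refine Prod.ext ?_ rfl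
  show (e • (Pi.single p 1 : Fin n → ℝ)) ∘ σ = e • (Pi.single (σ⁻¹ p) 1 : Fin n → ℝ)
  rw [← single_comp_perm]
  rfl

lemma isO5_perm (n : ℕ) (σ : Equiv.Perm (Fin n)) (x : F n) (hx : isO5 n x) :
    isO5 n (x.1 ∘ σ, x.2) := by
  obtain ⟨p, q, e, f, r, hpq, he, hf, rfl⟩ := hx
  refine ⟨σ⁻¹ p, σ⁻¹ q, e, f, r, fun h => hpq (σ⁻¹.injective h), he, hf, ?_⟩
  refine Prod.ext ?_ rfl
  show (e • (Pi.single p 1 : Fin n → ℝ) + f • (Pi.single q 1 : Fin n → ℝ)) ∘ σ = _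
  rw [← single_comp_perm n σ p, ← single_comp_perm n σ q]
  rfl

lemma flip_smul_single (n : ℕ) (b p : Fin n) (e : ℝ) :
    flip n b (e • (Pi.single p 1 : Fin n → ℝ))
      = (if p = b then -e else e) • (Pi.single p 1 : Fin n → ℝ) := by
  funext i
  by_cases hip : i = p <;> by_cases hib : i = b <;>
    simp_all [flip, Pi.single_apply] <;> simp [hib]

lemma flip_add (n : ℕ) (b : Fin n) (v w : Fin n → ℝ) :
    flip n b (v + w) = flip n b v + flip n b w := by
  funext i
  by_cases hib : i = b <;> simp [flip, hib] <;> ring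

lemma isO24_flip (n : ℕ) (b : Fin n) (x : F n) (hx : isO24 n x) :
    isO24 n (flip n b x.1, x.2) := by
  obtain ⟨p, e, m, he, rfl⟩ := hx
  refine ⟨p, if p = b then -e else e, m, ?_, ?_⟩
  · rcases he with rfl | rfl <;> split <;> simp
  · refine Prod.ext ?_ rfl
    exact flip_smul_single n b p e

lemma isO5_flip (n : ℕ) (b : Fin n) (x : F n) (hx : isO5 n x) :
    isO5 n (flip n b x.1, x.2) := by
  obtain ⟨p, q, e, f, r, hpq, he, hf, rfl⟩ := hx
  refine ⟨p, q, if p = b then -e else e, if q = b then -f else f, r, hpq, ?_, ?_, ?_⟩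
  · rcases he with rfl | rfl <;> split <;> simp
  · rcases hf with rfl | rfl <;> split <;> simp
  · refine Prod.ext ?_ rfl
    show flip n b _ = _
    rw [flip_add, flip_smul_single, flip_smul_single]

lemma PB_neg (n : ℕ) (u : Fin n → ℝ) (hu : u ∈ PB n) : -u ∈ PB n := by
  obtain ⟨k, h⟩ := hu
  refine ⟨-k, fun i => ?_⟩
  obtain ⟨m, hm⟩ := h i
  refine ⟨-m, ?_⟩
  show -(u i) = _
  rw [hm]
  push_cast
  ring

lemma isO24_tU (n : ℕ) (u : Fin n → ℝ) (hu : u ∈ PB n) (x : F n) (hx : isO24 n x) :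
    isO24 n ((tU n u).val x) := by
  obtain ⟨p, e, m, he, rfl⟩ := hx
  obtain ⟨k, h⟩ := hu
  obtain ⟨mp, hmp⟩ := h p
  rw [tU_val_apply]
  have hsum : ∑ i, (e • (Pi.single p 1 : Fin n → ℝ)) i * u i = e * u p :=
    smul_single_mul_sum n p e u
  rcases he with rfl | rfl
  · refine ⟨p, 2, m - 2*mp - k, Or.inl rfl, ?_⟩
    refine Prod.ext rfl ?_
    show (m:ℝ) - _ = _
    rw [hsum, hmp]
    push_cast
    ring
  · refine ⟨p, -2, m + 2*mp + k, Or.inr rfl, ?_⟩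
    refine Prod.ext rfl ?_
    show (m:ℝ) - _ = _
    rw [hsum, hmp]
    push_cast
    ring

lemma isO5_tU (n : ℕ) (u : Fin n → ℝ) (hu : u ∈ PB n) (x : F n) (hx : isO5 n x) :
    isO5 n ((tU n u).val x) := by
  obtain ⟨p, q, e, f, r, hpq, he, hf, rfl⟩ := hx
  obtain ⟨k, h⟩ := hu
  obtain ⟨mp, hmp⟩ := h p
  obtain ⟨mq, hmq⟩ := h q
  rw [tU_val_apply]
  have hsum : ∑ i, (e • (Pi.single p 1 : Fin n → ℝ)
      + f • (Pi.single q 1 : Fin n → ℝ)) i * u i = e * u p + f * u q := by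
    have : ∀ i, (e • (Pi.single p 1 : Fin n → ℝ) + f • (Pi.single q 1 : Fin n → ℝ)) i * u i
        = (e • (Pi.single p 1 : Fin n → ℝ)) i * u i
          + (f • (Pi.single q 1 : Fin n → ℝ)) i * u i := by
      intro i; simp [add_mul]
    rw [Finset.sum_congr rfl (fun i _ => this i), Finset.sum_add_distrib,
      smul_single_mul_sum, smul_single_mul_sum]
  rcases he with rfl | rfl <;> rcases hf with rfl | rfl
  · refine ⟨p, q, 1, 1, r - mp - mq - k, hpq, Or.inl rfl, Or.inl rfl, ?_⟩
    refine Prod.ext rfl ?_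
    show (r:ℝ) - _ = _
    rw [hsum, hmp, hmq]; push_cast; ring
  · refine ⟨p, q, 1, -1, r - mp + mq, hpq, Or.inl rfl, Or.inr rfl, ?_⟩
    refine Prod.ext rfl ?_
    show (r:ℝ) - _ = _
    rw [hsum, hmp, hmq]; push_cast; ring
  · refine ⟨p, q, -1, 1, r + mp - mq, hpq, Or.inr rfl, Or.inl rfl, ?_⟩
    refine Prod.ext rfl ?_
    show (r:ℝ) - _ = _
    rw [hsum, hmp, hmq]; push_cast; ring
  · refine ⟨p, q, -1, -1, r + mp + mq + k, hpq, Or.inr rfl, Or.inr rfl, ?_⟩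
    refine Prod.ext rfl ?_
    show (r:ℝ) - _ = _
    rw [hsum, hmp, hmq]; push_cast; ring

lemma sgen_inv (n k : ℕ) (h1 : 1 ≤ k) : (sgen n k)⁻¹ = sgen n k := by
  rw [sgen, if_neg (by omega), reflE_inv]

lemma sgen_preserves (n k : ℕ) (h1 : 1 ≤ k) (h2 : k ≤ n) (x : F n) :
    (isO24 n x → isO24 n ((sgen n k).val x)) ∧ (isO5 n x → isO5 n ((sgen n k).val x)) := by
  rcases eq_or_lt_of_le h2 with rfl | hlt
  · rw [sgen_n_apply k (by omega)]
    exact ⟨isO24_flip k _ x, isO5_flip k _ x⟩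
  · rw [sgen_swap_apply n k h1 (by omega)]
    exact ⟨isO24_perm n _ x, isO5_perm n _ x⟩

lemma WBtrans_preserves (n : ℕ) {w : (Module.End ℝ (F n))ˣ} (hw : w ∈ WBtrans n) :
    (∀ x, isO24 n x → isO24 n (w.val x)) ∧ (∀ x, isO5 n x → isO5 n (w.val x)) := by
  suffices h : ((∀ x, isO24 n x → isO24 n (w.val x)) ∧ (∀ x, isO5 n x → isO5 n (w.val x)))
      ∧ ((∀ x, isO24 n x → isO24 n ((w⁻¹).val x)) ∧ (∀ x, isO5 n x → isO5 n ((w⁻¹).val x))) by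
    exact h.1
  induction hw using Subgroup.closure_induction with
  | mem g hg =>
    rcases hg with ⟨k, ⟨hk1, hk2⟩, rfl⟩ | ⟨u, hu, rfl⟩
    · rw [sgen_inv n k hk1]
      exact ⟨⟨fun x => (sgen_preserves n k hk1 hk2 x).1, fun x => (sgen_preserves n k hk1 hk2 x).2⟩,
        ⟨fun x => (sgen_preserves n k hk1 hk2 x).1, fun x => (sgen_preserves n k hk1 hk2 x).2⟩⟩
    · rw [tU_inv]
      exact ⟨⟨fun x => isO24_tU n u hu x, fun x => isO5_tU n u hu x⟩,
        ⟨fun x => isO24_tU n (-u) (PB_neg n u hu) x, fun x => isO5_tU n (-u) (PB_neg n u hu) x⟩⟩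
  | one =>
    constructor <;> constructor <;> intro x hx <;> simpa using hx
  | mul g₁ g₂ hg₁ hg₂ ih₁ ih₂ =>
    have hval : ∀ (a b : (Module.End ℝ (F n))ˣ) (x : F n), (a * b).val x = a.val (b.val x) :=
      fun a b x => rfl
    refine ⟨⟨fun x hx => ?_, fun x hx => ?_⟩, ⟨fun x hx => ?_, fun x hx => ?_⟩⟩
    · rw [hval]; exact ih₁.1.1 _ (ih₂.1.1 x hx)
    · rw [hval]; exact ih₁.1.2 _ (ih₂.1.2 x hx)
    · rw [mul_inv_rev, hval]; exact ih₂.2.1 _ (ih₁.2.1 x hx)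
    · rw [mul_inv_rev, hval]; exact ih₂.2.2 _ (ih₁.2.2 x hx)
  | inv g hg ih =>
    refine ⟨ih.2, ?_⟩
    rw [inv_inv]
    exact ih.1

lemma units_mul_val (n : ℕ) (a b : (Module.End ℝ (F n))ˣ) (x : F n) :
    (a * b).val x = a.val (b.val x) := rfl

lemma reach24 (n : ℕ) (hn : 2 ≤ n) (x : F n) (hx : isO24 n x) :
    ∃ w ∈ WBtrans n,
      w.val x = (((2:ℝ) • (Pi.single (⟨0, by omega⟩ : Fin n) 1 : Fin n → ℝ), (0:ℝ)) : F n) := by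
  obtain ⟨p, e, m, he, rfl⟩ := hx
  set p₀ : Fin n := ⟨0, by omega⟩
  have he0 : e ≠ 0 := by rcases he with rfl | rfl <;> norm_num
  -- translation step
  set u : Fin n → ℝ := fun _ => (m:ℝ)/e with hu
  have humem : u ∈ PB n := by
    rcases he with rfl | rfl
    · exact const_half_mem_PB n m
    · have h2 := const_half_mem_PB n (-m)
      have : (fun _ : Fin n => ((-m:ℤ):ℝ)/2) = u := by
        funext i; simp [u]; push_cast; ring
      rwa [this] at h2
  have hstep1 : (tU n u).val (e • (Pi.single p 1 : Fin n → ℝ), (m:ℝ))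
      = ((e • (Pi.single p 1 : Fin n → ℝ), (0:ℝ)) : F n) := by
    rw [tU_val_apply]
    refine Prod.ext rfl ?_
    show (m:ℝ) - _ = 0
    rw [smul_single_mul_sum]
    show (m:ℝ) - e * ((m:ℝ)/e) = 0
    rw [mul_comm, div_mul_cancel₀ _ he0, sub_self]
  -- permutation step
  obtain ⟨v, hv, hva⟩ := QP_swap n p p₀
  have hperm : ((2:ℝ) • (Pi.single p 1 : Fin n → ℝ)) ∘ (Equiv.swap p p₀)
      = (2:ℝ) • (Pi.single p₀ 1 : Fin n → ℝ) := by
    have : ((2:ℝ) • (Pi.single p 1 : Fin n → ℝ)) ∘ (Equiv.swap p p₀)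
        = (2:ℝ) • ((Pi.single p 1 : Fin n → ℝ) ∘ (Equiv.swap p p₀)) := rfl
    rw [this, single_comp_perm]
    congr 1
    rw [Equiv.swap_inv, Equiv.swap_apply_left]
  rcases he with rfl | rfl
  · refine ⟨v * tU n u, mul_mem hv (tU_mem_WBtrans n u humem), ?_⟩
    rw [units_mul_val, hstep1, hva]
    exact Prod.ext hperm rfl
  · -- flip step
    obtain ⟨wf, hwf, hwfa⟩ := flip_mem n (by omega) p
    have hflip : flip n p ((-2:ℝ) • (Pi.single p 1 : Fin n → ℝ))
        = (2:ℝ) • (Pi.single p 1 : Fin n → ℝ) := by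
      rw [flip_smul_single, if_pos rfl]
      norm_num
    refine ⟨v * wf * tU n u, mul_mem (mul_mem hv hwf) (tU_mem_WBtrans n u humem), ?_⟩
    rw [units_mul_val, units_mul_val, hstep1, hwfa]
    show v.val ((flip n p ((-2:ℝ) • (Pi.single p 1 : Fin n → ℝ)), (0:ℝ)) : F n) = _
    rw [hflip, hva]
    exact Prod.ext hperm rfl

lemma reach5 (n : ℕ) (hn : 2 ≤ n) (x : F n) (hx : isO5 n x) :
    ∃ w ∈ WBtrans n,
      w.val x = (((Pi.single (⟨0, by omega⟩ : Fin n) 1 : Fin n → ℝ)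
        + (Pi.single (⟨1, by omega⟩ : Fin n) 1 : Fin n → ℝ), (0:ℝ)) : F n) := by
  obtain ⟨p, q, e, f, r, hpq, he, hf, rfl⟩ := hx
  set p₀ : Fin n := ⟨0, by omega⟩
  set q₀ : Fin n := ⟨1, by omega⟩
  have hp₀q₀ : p₀ ≠ q₀ := by simp [p₀, q₀, Fin.ext_iff]
  have he0 : e ≠ 0 := by rcases he with rfl | rfl <;> norm_num
  set X : F n := (e • (Pi.single p 1 : Fin n → ℝ) + f • (Pi.single q 1 : Fin n → ℝ), (r:ℝ))
    with hX
  -- translation step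
  set u : Fin n → ℝ := Pi.single p ((r:ℝ)/e) with hu
  have humem : u ∈ PB n := by
    apply int_mem_PB
    intro i
    by_cases hip : i = p
    · rcases he with rfl | rfl
      · exact ⟨r, by simp [u, hip]⟩
      · exact ⟨-r, by simp [u, hip]; push_cast; ring⟩
    · exact ⟨0, by simp [u, Pi.single_apply, hip]⟩
  have hXp : X.1 p = e := by
    simp [X, Pi.single_apply, hpq, (Ne.symm hpq)]
  have hstep1 : (tU n u).val X = ((X.1, (0:ℝ)) : F n) := by
    rw [tU_val_apply]
    refine Prod.ext rfl ?_
    show X.2 - _ = 0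
    rw [mul_single_sum, hXp]
    show (r:ℝ) - e * ((r:ℝ)/e) = 0
    field_simp
    ring
  -- flip steps
  obtain ⟨wp, hwp, hwpa⟩ := flip_mem n (by omega) p
  obtain ⟨wq, hwq, hwqa⟩ := flip_mem n (by omega) q
  have habs : ∀ (e' f' : ℝ), e' = 1 ∨ e' = -1 → f' = 1 ∨ f' = -1 →
      ∃ w' ∈ WBtrans n,
        w'.val ((e' • (Pi.single p 1 : Fin n → ℝ) + f' • (Pi.single q 1 : Fin n → ℝ), (0:ℝ)) : F n)
          = (((Pi.single p 1 : Fin n → ℝ) + (Pi.single q 1 : Fin n → ℝ), (0:ℝ)) : F n) := by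
    intro e' f' he' hf'
    have hfl : ∀ (b : Fin n) (c d : ℝ),
        flip n b (c • (Pi.single p 1 : Fin n → ℝ) + d • (Pi.single q 1 : Fin n → ℝ))
          = ((if p = b then -c else c) • (Pi.single p 1 : Fin n → ℝ)
            + (if q = b then -d else d) • (Pi.single q 1 : Fin n → ℝ)) := by
      intro b c d
      rw [flip_add, flip_smul_single, flip_smul_single]
    rcases he' with rfl | rfl <;> rcases hf' with rfl | rfl
    · refine ⟨1, one_mem _, ?_⟩
      simp
    · refine ⟨wq, hwq, ?_⟩
      rw [hwqa]
      refine Prod.ext ?_ rfl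
      show flip n q _ = _
      rw [hfl, if_neg hpq, if_pos rfl]
      norm_num
    · refine ⟨wp, hwp, ?_⟩
      rw [hwpa]
      refine Prod.ext ?_ rfl
      show flip n p _ = _
      rw [hfl, if_pos rfl, if_neg (Ne.symm hpq)]
      norm_num
    · refine ⟨wq * wp, mul_mem hwq hwp, ?_⟩
      rw [units_mul_val, hwpa]
      show wq.val ((flip n p _, (0:ℝ)) : F n) = _
      rw [hfl, if_pos rfl, if_neg (Ne.symm hpq), hwqa]
      refine Prod.ext ?_ rfl
      show flip n q _ = _
      rw [hfl, if_neg hpq, if_pos rfl]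
      norm_num
  obtain ⟨w', hw', hw'a⟩ := habs e f he hf
  -- permutation step
  set τ₁ := Equiv.swap p₀ p with hτ₁
  set q' := τ₁ q with hq'
  have hq'p₀ : q' ≠ p₀ := by
    intro hcon
    apply hpq
    have := congrArg τ₁ hcon
    rw [hq', Equiv.swap_apply_self, Equiv.swap_apply_left] at this
    exact this.symm ▸ rfl
  set τ := τ₁ * Equiv.swap q₀ q' with hτ
  have hτp₀ : τ p₀ = p := by
    rw [hτ, Equiv.Perm.mul_apply, Equiv.swap_apply_of_ne_of_ne hp₀q₀ (Ne.symm hq'p₀),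
      hτ₁, Equiv.swap_apply_left]
  have hτq₀ : τ q₀ = q := by
    rw [hτ, Equiv.Perm.mul_apply, Equiv.swap_apply_left, hq', Equiv.swap_apply_self]
  obtain ⟨v, hv, hva⟩ := QP_all n τ
  have hcomp : ((Pi.single p 1 : Fin n → ℝ) + (Pi.single q 1 : Fin n → ℝ)) ∘ τ
      = (Pi.single p₀ 1 : Fin n → ℝ) + (Pi.single q₀ 1 : Fin n → ℝ) := by
    have : ((Pi.single p 1 : Fin n → ℝ) + (Pi.single q 1 : Fin n → ℝ)) ∘ τ
        = (Pi.single p 1 : Fin n → ℝ) ∘ τ + (Pi.single q 1 : Fin n → ℝ) ∘ τ := rfl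
    rw [this, single_comp_perm, single_comp_perm]
    have h1 : τ⁻¹ p = p₀ := by rw [Equiv.Perm.inv_eq_iff_eq]; exact hτp₀.symm
    have h2 : τ⁻¹ q = q₀ := by rw [Equiv.Perm.inv_eq_iff_eq]; exact hτq₀.symm
    rw [h1, h2]
  refine ⟨v * (w' * tU n u),
    mul_mem hv (mul_mem hw' (tU_mem_WBtrans n u humem)), ?_⟩
  rw [units_mul_val, units_mul_val, hstep1]
  show v.val (w'.val ((X.1, (0:ℝ)) : F n)) = _
  rw [hw'a, hva]
  exact Prod.ext hcomp rfl

lemma disjoint_24_5 (n : ℕ) (x : F n) (h24 : isO24 n x) (h5 : isO5 n x) : False := by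
  obtain ⟨p, e, m, he, rfl⟩ := h24
  obtain ⟨p', q', e', f', r, hpq, he', hf', hx⟩ := h5
  have h1 := congrFun (congrArg Prod.fst hx) p'
  have h2 := congrFun (congrArg Prod.fst hx) q'
  simp only [Pi.add_apply, Pi.smul_apply, Pi.single_apply, smul_eq_mul] at h1 h2
  simp only [if_true, if_neg hpq, mul_one, mul_zero, add_zero] at h1
  simp only [if_true, if_neg (Ne.symm hpq), mul_one, mul_zero, zero_add] at h2
  by_cases hp : p' = p
  · by_cases hq : q' = p
    · exact hpq (hp.trans hq.symm)
    · rw [if_neg hq] at h2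
      rcases hf' with rfl | rfl <;> norm_num at h2
  · rw [if_neg hp] at h1
    rcases he' with rfl | rfl <;> norm_num at h1

/-- `W^{B∨,RY} = t(P_{B_n}) ⋊ W_0` preserves `S^{B∨,RY} = O_2 ∪ O_4 ∪ O_5`,
with orbits exactly `O_2 ∪ O_4` and `O_5`. -/
theorem WBRY_orbits (n : ℕ) (hn : 2 ≤ n) :
    (∀ w ∈ WBtrans n, ∀ a ∈ O2 n ∪ O4 n, w.val a ∈ O2 n ∪ O4 n) ∧
    (∀ w ∈ WBtrans n, ∀ a ∈ O5 n, w.val a ∈ O5 n) ∧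
    Disjoint (O2 n ∪ O4 n) (O5 n) ∧
    (∀ a ∈ O2 n ∪ O4 n, ∀ b ∈ O2 n ∪ O4 n, ∃ w ∈ WBtrans n, w.val a = b) ∧
    (∀ a ∈ O5 n, ∀ b ∈ O5 n, ∃ w ∈ WBtrans n, w.val a = b) := by
  refine ⟨?_, ?_, ?_, ?_, ?_⟩
  · intro w hw a ha
    rw [mem_O24_iff] at ha ⊢
    exact (WBtrans_preserves n hw).1 a ha
  · intro w hw a ha
    rw [mem_O5_iff] at ha ⊢
    exact (WBtrans_preserves n hw).2 a ha
  · rw [Set.disjoint_left]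
    intro a ha h5
    exact disjoint_24_5 n a ((mem_O24_iff n a).1 ha) ((mem_O5_iff n a).1 h5)
  · intro a ha b hb
    obtain ⟨wa, hwa, ha'⟩ := reach24 n hn a ((mem_O24_iff n a).1 ha)
    obtain ⟨wb, hwb, hb'⟩ := reach24 n hn b ((mem_O24_iff n b).1 hb)
    refine ⟨wb⁻¹ * wa, mul_mem (inv_mem hwb) hwa, ?_⟩
    rw [units_mul_val, ha', ← hb']
    show (wb⁻¹ * wb).val b = b
    rw [inv_mul_cancel]
    rfl
  · intro a ha b hb
    obtain ⟨wa, hwa, ha'⟩ := reach5 n hn a ((mem_O5_iff n a).1 ha)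
    obtain ⟨wb, hwb, hb'⟩ := reach5 n hn b ((mem_O5_iff n b).1 hb)
    refine ⟨wb⁻¹ * wa, mul_mem (inv_mem hwb) hwa, ?_⟩
    rw [units_mul_val, ha', ← hb']
    show (wb⁻¹ * wb).val b = b
    rw [inv_mul_cancel]
    rfl

end CvC
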